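/- Let ε > 0, A₁, A₂ > 0, p ∈ ℝ, 0 < s < L, and let h : [0, L] → (0, ∞) be continuously differentiable on [0, L] with h'(0) = 0 and h'(L) = 0, twice continuously differentiable on (0, s) and on (s, L), satisfying the axisymmetric steady-state equation h''(r) + h'(r)/r = A₁·Π_ε(h(r)) − p on (0, s) and h''(r) + h'(r)/r = A₂·Π_ε(h(r)) − p on (s, L), and suppose that r ↦ h'(r)²/r is integrable on (0, L). Then (A₂ − A₁)·U_ε(h(s)) = A₂·U_ε(h(L)) − A₁·U_ε(h(0)) + p·(h(0) − h(L)) − ∫₀^L h'(r)²/r dr. -/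

import Mathlib

/-- The disjoining pressure `Π_ε(h) = ε²/h³ − ε³/h⁴`. -/
noncomputable def disjoiningPressure (ε h : ℝ) : ℝ := ε^2 / h^3 - ε^3 / h^4

/-- The wetting potential `U_ε(h) = −ε²/(2h²) + ε³/(3h³)`. -/
noncomputable def wettingPotential (ε h : ℝ) : ℝ := -ε^2 / (2*h^2) + ε^3 / (3*h^3)

/-!
On each patch the planar first integral `E = h'²/2 + p h − A U_ε(h)` would be conserved;
the curvature term `h'/r` of the radial Laplacian makes it decay instead, with
`E' = −h'²/r`. Integrating over `[0, s]` with `A₁` and over `[s, L]` with `A₂`, adding,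
and using `h'(0) = h'(L) = 0` and the continuity of `h, h'` at `s` gives the identity.
-/

open Set MeasureTheory

theorem hasDerivAt_wettingPotential (ε : ℝ) {y : ℝ} (hy : y ≠ 0) :
    HasDerivAt (wettingPotential ε) (disjoiningPressure ε y) y := by
  have h2 : HasDerivAt (fun y : ℝ => 2 * y ^ 2) (2 * (2 * y)) y := by
    simpa using (hasDerivAt_pow 2 y).const_mul 2
  have h3 : HasDerivAt (fun y : ℝ => 3 * y ^ 3) (3 * (3 * y ^ 2)) y := by
    simpa using (hasDerivAt_pow 3 y).const_mul 3
  refine (((hasDerivAt_const y (-ε ^ 2)).div h2 (by positivity)).add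
    ((hasDerivAt_const y (ε ^ 3)).div h3 (by positivity))).congr_deriv ?_
  simp only [disjoiningPressure]
  field_simp
  ring

noncomputable def radialEnergy (ε A p : ℝ) (h h' : ℝ → ℝ) (r : ℝ) : ℝ :=
  h' r ^ 2 / 2 + p * h r - A * wettingPotential ε (h r)

theorem hasDerivAt_radialEnergy {ε A p r : ℝ} {h h' : ℝ → ℝ} (hr : h r ≠ 0)
    (hd1 : HasDerivAt h (h' r) r)
    (hd2 : HasDerivAt h' (A * disjoiningPressure ε (h r) - p - h' r / r) r) :
    HasDerivAt (radialEnergy ε A p h h') (-(h' r ^ 2 / r)) r := by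
  have hU := (hasDerivAt_wettingPotential ε hr).comp r hd1
  refine ((((hd2.pow 2).div_const 2).add (hd1.const_mul p)).sub (hU.const_mul A)).congr_deriv ?_
  ring

theorem integral_sq_deriv_div_eq_radialEnergy_sub {ε A p a b : ℝ} {h h' : ℝ → ℝ}
    (hab : a ≤ b) (hpos : ∀ r ∈ Icc a b, 0 < h r)
    (hd1 : ∀ r ∈ Icc a b, HasDerivWithinAt h (h' r) (Icc a b) r)
    (hcont : ContinuousOn h' (Icc a b))
    (hd2 : ∀ r ∈ Ioo a b, HasDerivAt h' (A * disjoiningPressure ε (h r) - p - h' r / r) r)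
    (hint : IntervalIntegrable (fun r => h' r ^ 2 / r) volume a b) :
    ∫ r in a..b, h' r ^ 2 / r = radialEnergy ε A p h h' a - radialEnergy ε A p h h' b := by
  have hh : ContinuousOn h (Icc a b) := fun r hr => (hd1 r hr).continuousWithinAt
  have hU : ContinuousOn (fun r => wettingPotential ε (h r)) (Icc a b) := fun r hr =>
    (hasDerivAt_wettingPotential ε (hpos r hr).ne').continuousAt.comp_continuousWithinAt
      (hh r hr)
  have hE : ContinuousOn (radialEnergy ε A p h h') (Icc a b) :=
    (((hcont.pow 2).div_const 2).add (hh.const_smul p)).sub (hU.const_smul A)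
  have hE' : ∀ r ∈ Ioo a b, HasDerivAt (radialEnergy ε A p h h') (-(h' r ^ 2 / r)) r :=
    fun r hr => hasDerivAt_radialEnergy (hpos r (Ioo_subset_Icc_self hr)).ne'
      ((hd1 r (Ioo_subset_Icc_self hr)).hasDerivAt (Icc_mem_nhds hr.1 hr.2)) (hd2 r hr)
  rw [← neg_sub, ← intervalIntegral.integral_eq_sub_of_hasDerivAt_of_le hab hE hE' hint.neg,
    intervalIntegral.integral_neg, neg_neg]

theorem stmt_18_general (ε A₁ A₂ p s L : ℝ)
    (hs : 0 < s) (hsL : s < L)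
    (h h' : ℝ → ℝ)
    (hpos : ∀ r ∈ Set.Icc 0 L, 0 < h r)
    (hd1 : ∀ r ∈ Set.Icc 0 L, HasDerivWithinAt h (h' r) (Set.Icc 0 L) r)
    (hcont : ContinuousOn h' (Set.Icc 0 L))
    (hb0 : h' 0 = 0) (hbL : h' L = 0)
    -- the axisymmetric steady-state equation h'' + h'/r = A₁·Π_ε(h) − p on (0, s)
    (hd2a : ∀ r ∈ Set.Ioo 0 s,
      HasDerivAt h' (A₁ * disjoiningPressure ε (h r) - p - h' r / r) r)
    -- the axisymmetric steady-state equation h'' + h'/r = A₂·Π_ε(h) − p on (s, L)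
    (hd2b : ∀ r ∈ Set.Ioo s L,
      HasDerivAt h' (A₂ * disjoiningPressure ε (h r) - p - h' r / r) r)
    (hint : IntervalIntegrable (fun r => (h' r)^2 / r) MeasureTheory.volume 0 L) :
    (A₂ - A₁) * wettingPotential ε (h s) =
      A₂ * wettingPotential ε (h L) - A₁ * wettingPotential ε (h 0)
        + p * (h 0 - h L) - ∫ r in (0:ℝ)..L, (h' r)^2 / r := by
  have hsub₁ : Icc 0 s ⊆ Icc 0 L := Icc_subset_Icc_right hsL.le
  have hsub₂ : Icc s L ⊆ Icc 0 L := Icc_subset_Icc_left hs.le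
  have hsmem : s ∈ uIcc 0 L := mem_uIcc_of_le hs.le hsL.le
  have hint₁ := hint.mono_set (uIcc_subset_uIcc left_mem_uIcc hsmem)
  have hint₂ := hint.mono_set (uIcc_subset_uIcc hsmem right_mem_uIcc)
  have e₁ := integral_sq_deriv_div_eq_radialEnergy_sub hs.le (fun r hr => hpos r (hsub₁ hr))
    (fun r hr => (hd1 r (hsub₁ hr)).mono hsub₁) (hcont.mono hsub₁) hd2a hint₁
  have e₂ := integral_sq_deriv_div_eq_radialEnergy_sub hsL.le (fun r hr => hpos r (hsub₂ hr))
    (fun r hr => (hd1 r (hsub₂ hr)).mono hsub₂) (hcont.mono hsub₂) hd2b hint₂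
  rw [← intervalIntegral.integral_add_adjacent_intervals hint₁ hint₂, e₁, e₂]
  simp only [radialEnergy, hb0, hbL]
  ring

theorem stmt_18 (ε A₁ A₂ p s L : ℝ) (hε : 0 < ε) (hA₁ : 0 < A₁) (hA₂ : 0 < A₂)
    (hs : 0 < s) (hsL : s < L)
    (h h' : ℝ → ℝ)
    (hpos : ∀ r ∈ Set.Icc 0 L, 0 < h r)
    (hd1 : ∀ r ∈ Set.Icc 0 L, HasDerivWithinAt h (h' r) (Set.Icc 0 L) r)
    (hcont : ContinuousOn h' (Set.Icc 0 L))
    (hb0 : h' 0 = 0) (hbL : h' L = 0)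
    -- the axisymmetric steady-state equation h'' + h'/r = A₁·Π_ε(h) − p on (0, s)
    (hd2a : ∀ r ∈ Set.Ioo 0 s,
      HasDerivAt h' (A₁ * disjoiningPressure ε (h r) - p - h' r / r) r)
    -- the axisymmetric steady-state equation h'' + h'/r = A₂·Π_ε(h) − p on (s, L)
    (hd2b : ∀ r ∈ Set.Ioo s L,
      HasDerivAt h' (A₂ * disjoiningPressure ε (h r) - p - h' r / r) r)
    (hint : IntervalIntegrable (fun r => (h' r)^2 / r) MeasureTheory.volume 0 L) :
    (A₂ - A₁) * wettingPotential ε (h s) =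
      A₂ * wettingPotential ε (h L) - A₁ * wettingPotential ε (h 0)
        + p * (h 0 - h L) - ∫ r in (0:ℝ)..L, (h' r)^2 / r :=
  stmt_18_general ε A₁ A₂ p s L hs hsL h h' hpos hd1 hcont hb0 hbL hd2a hd2b hint
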